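/- Let λ be a positive root and t ∈ B with λ_t = 1 (the coordinate of λ at α_t equals 1). Then λ = ρ(w) α_t for some w belonging to the subgroup of W generated by the distinguished generators {s ∈ B : s ≠ t}. -/

import Mathlib

open Real

variable {B : Type*}

/-- The pairing constant `⟨α_s, α_t⟩` of the standard bilinear form:
`-cos (π / M s t)` if `M s t ≠ 0`, and `-1` if `M s t = 0` (i.e. `m_{s,t} = ∞`). -/
noncomputable def pairing (M : CoxeterMatrix B) (s t : B) : ℝ :=
  if M s t = 0 then -1 else -Real.cos (Real.pi / (M s t : ℝ))

/-- The standard symmetric bilinear form on `V = B → ℝ`. -/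
noncomputable def form [Fintype B] (M : CoxeterMatrix B) (v w : B → ℝ) : ℝ :=
  ∑ s, ∑ t, v s * w t * pairing M s t

/-- The simple root `α_s`, i.e. the standard basis vector at `s`. -/
noncomputable def sroot [DecidableEq B] (s : B) : B → ℝ := Pi.single s 1

/-- `λ` is a root: `λ = ρ(w) α_s` for some `w ∈ W`, `s ∈ B`. -/
def IsRoot [DecidableEq B] (M : CoxeterMatrix B)
    (ρ : M.Group →* Module.End ℝ (B → ℝ)) (lam : B → ℝ) : Prop :=
  ∃ (w : M.Group) (s : B), ρ w (sroot s) = lam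

/-- `λ` is positive: all coordinates are nonnegative. -/
def IsPos (lam : B → ℝ) : Prop := ∀ s, 0 ≤ lam s

/-- `λ` is negative: all coordinates are nonpositive. -/
def IsNeg (lam : B → ℝ) : Prop := ∀ s, lam s ≤ 0

/-- `λ` is a positive root. -/
def IsPosRoot [DecidableEq B] (M : CoxeterMatrix B)
    (ρ : M.Group →* Module.End ℝ (B → ℝ)) (lam : B → ℝ) : Prop :=
  IsRoot M ρ lam ∧ IsPos lam

/-- `λ` dominates `μ`: for every `w ∈ W`, if `ρ(w) μ` is positive then so is `ρ(w) λ`. -/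
def Dominates (M : CoxeterMatrix B)
    (ρ : M.Group →* Module.End ℝ (B → ℝ)) (lam mu : B → ℝ) : Prop :=
  ∀ w : M.Group, IsPos (ρ w mu) → IsPos (ρ w lam)

/-- `λ` is a minimal root: a positive root dominating no positive root other than itself. -/
def IsMinimal [DecidableEq B] (M : CoxeterMatrix B)
    (ρ : M.Group →* Module.End ℝ (B → ℝ)) (lam : B → ℝ) : Prop :=
  IsPosRoot M ρ lam ∧
    ∀ mu, IsPosRoot M ρ mu → Dominates M ρ lam mu → mu = lam

/-- The depth `δ(λ)` of a positive root:
the least Coxeter length of a `w ∈ W` with `ρ(w⁻¹) λ` negative. -/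
noncomputable def depth (M : CoxeterMatrix B)
    (ρ : M.Group →* Module.End ℝ (B → ℝ)) (lam : B → ℝ) : ℕ :=
  sInf {n | ∃ w : M.Group, IsNeg (ρ w⁻¹ lam) ∧ M.toCoxeterSystem.length w = n}

/-- The partial order `λ ⪯ μ` on positive roots:
`μ = ρ(w) λ` for some `w` with `δ(μ) = ℓ(w) + δ(λ)`. -/
def PLE (M : CoxeterMatrix B)
    (ρ : M.Group →* Module.End ℝ (B → ℝ)) (lam mu : B → ℝ) : Prop :=
  ∃ w : M.Group, mu = ρ w lam ∧
    depth M ρ mu = M.toCoxeterSystem.length w + depth M ρ lam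

/-- The Coxeter graph of `M`: distinct `s`, `t` are adjacent iff `M s t ≥ 3` or `M s t = 0`. -/
def coxGraph (M : CoxeterMatrix B) : SimpleGraph B where
  Adj s t := s ≠ t ∧ (M s t = 0 ∨ 3 ≤ M s t)
  symm := by
    constructor; intro s t h
    exact ⟨h.1.symm, by rw [M.symmetric t s]; exact h.2⟩
  loopless := by constructor; intro s h; exact h.1 rfl

/-- The support of a vector `λ ∈ V`. -/
def supp (lam : B → ℝ) : Set B := {s | lam s ≠ 0}

/-!
Induction on the depth of `λ`. If `⟨λ, α_s⟩ ≤ 0` for all `s ≠ t`, then expanding `⟨λ, λ⟩ = 1` in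
the coordinates of `λ` gives `⟨λ, α_t⟩ ≥ 1`, so `σ_t λ` has negative `t`-coordinate, hence is a
negative root, which forces `λ = α_t`. Otherwise reflect in an `s ≠ t` with `⟨λ, α_s⟩ > 0`: this
keeps the `t`-coordinate `1`, so `σ_s λ` is again a positive root, and it lowers the depth.

Both steps rest on the dichotomy that every root is positive or negative, which comes from the
classical fact that `ρ(w) α_s ≥ 0` when `ℓ(w s) > ℓ(w)`: factor `w` through the dihedral subgroup
generated by `s` and a right descent `t` of `w`, where `ρ` is computed explicitly in terms of
`sin (j π / m_{st}) / sin (π / m_{st})`.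
-/

open CoxeterSystem

namespace CoxeterMatrix

variable (M : CoxeterMatrix B)

@[simp]
theorem inv_simple (s : B) : (M.simple s)⁻¹ = M.simple s := M.toCoxeterSystem.inv_simple s

@[simp]
theorem simple_mul_simple_self (s : B) : M.simple s * M.simple s = 1 :=
  M.toCoxeterSystem.simple_mul_simple_self s

end CoxeterMatrix

namespace CoxeterSystem

variable {W : Type*} [Group W] {M : CoxeterMatrix B} {cs : CoxeterSystem M W}

theorem exists_eq_mul_alternatingWord {s t : B} {w : W} (hs : ¬cs.IsRightDescent w s) :
    ∃ v k, w = v * cs.wordProd (alternatingWord s t k) ∧ cs.length w = cs.length v + k ∧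
      ¬cs.IsRightDescent v s ∧ ¬cs.IsRightDescent v t := by
  induction h : cs.length w using Nat.strong_induction_on generalizing w s t with
  | _ n ih =>
    by_cases ht : cs.IsRightDescent w t
    · have hlen := cs.isRightDescent_iff.mp ht
      obtain ⟨v, k, hw, hlen', hvt, hvs⟩ := ih _ (by omega) (s := t) (t := s)
        (cs.isRightDescent_iff_not_isRightDescent_mul.mp ht) rfl
      refine ⟨v, k + 1, ?_, by omega, hvs, hvt⟩
      rw [alternatingWord_succ, wordProd_concat, ← mul_assoc, ← hw,
        simple_mul_simple_cancel_right]
    · exact ⟨w, 0, by simp [alternatingWord], by omega, hs, ht⟩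

theorem exists_eq_mul_alternatingWord_of_isRightDescent {s t : B} {w : W}
    (hs : ¬cs.IsRightDescent w s) (ht : cs.IsRightDescent w t) :
    ∃ v k, w = v * cs.wordProd (alternatingWord s t k) ∧ cs.length v < cs.length w ∧
      ¬cs.IsRightDescent v s ∧ ¬cs.IsRightDescent v t ∧ (M s t = 0 ∨ k < M s t) := by
  obtain ⟨v, k, hw, hlen, hvs, hvt⟩ := exists_eq_mul_alternatingWord (t := t) hs
  have hk : k ≠ 0 := by
    rintro rfl
    simp only [alternatingWord, wordProd_nil, mul_one] at hw
    exact hvt (hw ▸ ht)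
  have hred : cs.IsReduced (alternatingWord t s (k + 1)) := by
    have hws := cs.not_isRightDescent_iff.mp hs
    have hle := cs.length_mul_le v (cs.wordProd (alternatingWord t s (k + 1)))
    rw [alternatingWord_succ, wordProd_concat, ← mul_assoc, ← hw] at hle
    have := cs.length_wordProd_le (alternatingWord t s (k + 1))
    simp only [IsReduced, length_alternatingWord] at this ⊢
    rw [alternatingWord_succ, wordProd_concat] at this ⊢
    omega
  refine ⟨v, k, hw, by omega, hvs, hvt, ?_⟩
  by_contra! hM
  rw [M.symmetric] at hM
  exact cs.not_isReduced_alternatingWord t s hM.1 (by omega) hred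

end CoxeterSystem

section Form

variable (M : CoxeterMatrix B)

theorem pairing_symm (s t : B) : pairing M s t = pairing M t s := by
  rw [pairing, pairing, M.symmetric]

@[simp]
theorem pairing_self (s : B) : pairing M s s = 1 := by
  simp [pairing]

variable [Fintype B]

theorem form_eq_toLinearMap₂' [DecidableEq B] (v w : B → ℝ) :
    form M v w = Matrix.toLinearMap₂' ℝ (Matrix.of (pairing M)) v w := by
  simp [form, Matrix.toLinearMap₂'_apply, mul_assoc]

theorem form_symm (v w : B → ℝ) : form M v w = form M w v := by
  rw [form, form, Finset.sum_comm]
  simp_rw [pairing_symm M _ _, mul_comm (v _)]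

@[simp]
theorem form_add_left (u v w : B → ℝ) : form M (u + v) w = form M u w + form M v w := by
  classical simp [form_eq_toLinearMap₂']

@[simp]
theorem form_sub_left (u v w : B → ℝ) : form M (u - v) w = form M u w - form M v w := by
  classical simp [form_eq_toLinearMap₂']

@[simp]
theorem form_smul_left (a : ℝ) (v w : B → ℝ) : form M (a • v) w = a * form M v w := by
  classical simp [form_eq_toLinearMap₂']

@[simp]
theorem form_sub_right (u v w : B → ℝ) : form M u (v - w) = form M u v - form M u w := by
  classical simp [form_eq_toLinearMap₂']

@[simp]
theorem form_smul_right (a : ℝ) (v w : B → ℝ) : form M v (a • w) = a * form M v w := by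
  classical simp [form_eq_toLinearMap₂']

variable [DecidableEq B]

@[simp]
theorem form_sroot_sroot (s t : B) : form M (sroot s) (sroot t) = pairing M s t := by
  simp [form_eq_toLinearMap₂', Matrix.toLinearMap₂'_apply, sroot, Pi.single_apply]

theorem form_eq_sum_mul_form_sroot (v w : B → ℝ) :
    form M v w = ∑ u, v u * form M (sroot u) w := by
  simp [form_eq_toLinearMap₂', Matrix.toLinearMap₂'_apply, sroot, Pi.single_apply, Finset.mul_sum]

end Form

section Sroot

variable [DecidableEq B]

@[simp]
theorem sroot_apply_self (s : B) : sroot s s = 1 := Pi.single_eq_same s 1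

@[simp]
theorem sroot_apply_of_ne {s u : B} (h : u ≠ s) : sroot s u = 0 := Pi.single_eq_of_ne h 1

theorem isPos_sroot (s : B) : IsPos (sroot (B := B) s) := by
  intro u
  rcases eq_or_ne u s with rfl | h <;> simp [*]

theorem eq_smul_sroot_of_apply_eq_zero {v : B → ℝ} {r : B} (h : ∀ u ≠ r, v u = 0) :
    v = v r • sroot r := by
  ext u
  rcases eq_or_ne u r with rfl | hu <;> simp [*]

end Sroot

theorem IsPos.eq_zero_of_isNeg {v : B → ℝ} (hp : IsPos v) (hn : IsNeg v) : v = 0 :=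
  funext fun u => le_antisymm (hn u) (hp u)

@[simp]
theorem isNeg_neg_iff {v : B → ℝ} : IsNeg (-v) ↔ IsPos v := by
  simp [IsNeg, IsPos]

theorem IsPos.add {v w : B → ℝ} (hv : IsPos v) (hw : IsPos w) : IsPos (v + w) :=
  fun u => add_nonneg (hv u) (hw u)

theorem IsPos.smul {a : ℝ} {v : B → ℝ} (ha : 0 ≤ a) (hv : IsPos v) : IsPos (a • v) :=
  fun u => mul_nonneg ha (hv u)

section Rep

variable [DecidableEq B] {M : CoxeterMatrix B} {ρ : M.Group →* Module.End ℝ (B → ℝ)}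

theorem IsRoot.ne_zero {lam : B → ℝ} (h : IsRoot M ρ lam) : lam ≠ 0 := by
  obtain ⟨w, s, rfl⟩ := h
  intro h0
  have := Representation.inv_self_apply ρ w (sroot s)
  rw [h0, map_zero] at this
  simpa using congrFun this s

theorem IsRoot.apply {lam : B → ℝ} (h : IsRoot M ρ lam) (g : M.Group) :
    IsRoot M ρ (ρ g lam) := by
  obtain ⟨w, s, rfl⟩ := h
  exact ⟨g * w, s, by simp⟩

variable [Fintype B]

variable (M ρ) in
def IsReflectionRep : Prop :=
  ∀ (s : B) (v : B → ℝ), ρ (M.simple s) v = v - (2 * form M v (sroot s)) • sroot s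

namespace IsReflectionRep

variable (hρ : IsReflectionRep M ρ)
include hρ

theorem apply_simple_sroot (s : B) : ρ (M.simple s) (sroot s) = -sroot s := by
  rw [hρ, form_sroot_sroot, pairing_self]
  module

theorem apply_simple_apply_of_ne {s u : B} (h : u ≠ s) (v : B → ℝ) :
    ρ (M.simple s) v u = v u := by
  simp [hρ s v, h]

theorem apply_simple_apply_self (s : B) (v : B → ℝ) :
    ρ (M.simple s) v s = v s - 2 * form M v (sroot s) := by
  simp [hρ s v]

theorem form_apply_simple (s : B) (x y : B → ℝ) :
    form M (ρ (M.simple s) x) (ρ (M.simple s) y) = form M x y := by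
  rw [hρ, hρ]
  simp only [form_sub_left, form_sub_right, form_smul_left, form_smul_right,
    form_sroot_sroot, pairing_self, form_symm M (sroot s) y]
  ring

theorem form_apply (g : M.Group) (x y : B → ℝ) : form M (ρ g x) (ρ g y) = form M x y := by
  induction g using M.toCoxeterSystem.simple_induction_left generalizing x y with
  | one => simp
  | mul_simple_left w s ih => simp [hρ.form_apply_simple, ih]

theorem form_self_of_isRoot {lam : B → ℝ} (h : IsRoot M ρ lam) : form M lam lam = 1 := by
  obtain ⟨w, s, rfl⟩ := h
  simp [hρ.form_apply]

end IsReflectionRep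

end Rep

section RankTwo

variable (M : CoxeterMatrix B)

theorem exists_chebyshev_sequence_nonneg {s t : B} (hst : s ≠ t) :
    ∃ u : ℕ → ℝ, u 0 = 0 ∧ u 1 = 1 ∧ (∀ j, u (j + 2) = -2 * pairing M s t * u (j + 1) - u j) ∧
      ∀ j, (M s t = 0 ∨ j ≤ M s t) → 0 ≤ u j := by
  by_cases h0 : M s t = 0
  · refine ⟨fun j => j, by simp, by simp, fun j => ?_, fun j _ => j.cast_nonneg⟩
    simp only [pairing, if_pos h0]
    push_cast
    ring
  · have hm : (1 : ℝ) < M s t := by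
      have := M.off_diagonal s t hst
      exact_mod_cast (by omega : 1 < M s t)
    set θ := π / M s t with hθ
    have hθ_pos : 0 < θ := by positivity
    have hsin : 0 < sin θ := sin_pos_of_pos_of_lt_pi hθ_pos (div_lt_self pi_pos hm)
    refine ⟨fun j => sin (j * θ) / sin θ, by simp, by simp [hsin.ne'], fun j => ?_, ?_⟩
    · have h₁ : ((j + 2 : ℕ) : ℝ) * θ = (j + 1 : ℕ) * θ + θ := by push_cast; ring
      have h₂ : (j : ℝ) * θ = (j + 1 : ℕ) * θ - θ := by push_cast; ring
      simp only [pairing, if_neg h0, ← hθ]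
      rw [h₁, h₂, sin_add, sin_sub]
      field_simp
      ring
    · rintro j (h | hj)
      · exact absurd h h0
      refine div_nonneg (sin_nonneg_of_nonneg_of_le_pi (by positivity) ?_) hsin.le
      calc (j : ℝ) * θ ≤ M s t * θ := by gcongr
        _ = π := by rw [hθ]; field_simp

end RankTwo

namespace IsReflectionRep

variable [Fintype B] [DecidableEq B] {M : CoxeterMatrix B} {ρ : M.Group →* Module.End ℝ (B → ℝ)}
  (hρ : IsReflectionRep M ρ)
include hρ

theorem apply_alternatingWord_sroot (s t : B) (u : ℕ → ℝ) (hu₀ : u 0 = 0) (hu₁ : u 1 = 1)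
    (hu : ∀ j, u (j + 2) = -2 * pairing M s t * u (j + 1) - u j) (k : ℕ) :
    ρ (M.toCoxeterSystem.wordProd (alternatingWord s t k)) (sroot s) =
      (if Even k then u (k + 1) else u k) • sroot s +
        (if Even k then u k else u (k + 1)) • sroot t := by
  induction k with
  | zero => simp [alternatingWord, hu₀, hu₁]
  | succ k ih =>
    rw [alternatingWord_succ', wordProd_cons, map_mul, Module.End.mul_apply, ih,
      CoxeterMatrix.toCoxeterSystem_simple]
    by_cases hk : Even k <;>
      simp only [hk, Nat.even_add_one, not_true_eq_false, not_false_eq_true, if_true, if_false] <;>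
      rw [hρ] <;>
      simp only [form_add_left, form_smul_left, form_sroot_sroot, pairing_self,
        pairing_symm M t s, hu k] <;>
      match_scalars <;> ring

theorem exists_nonneg_apply_alternatingWord_sroot {s t : B} (hst : s ≠ t) {k : ℕ}
    (hk : M s t = 0 ∨ k < M s t) :
    ∃ a b : ℝ, 0 ≤ a ∧ 0 ≤ b ∧
      ρ (M.toCoxeterSystem.wordProd (alternatingWord s t k)) (sroot s) =
        a • sroot s + b • sroot t := by
  obtain ⟨u, hu₀, hu₁, hu, hnonneg⟩ := exists_chebyshev_sequence_nonneg M hst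
  have h₀ : 0 ≤ u k := hnonneg k (by omega)
  have h₁ : 0 ≤ u (k + 1) := hnonneg (k + 1) (by omega)
  exact ⟨_, _, by split <;> assumption, by split <;> assumption,
    hρ.apply_alternatingWord_sroot s t u hu₀ hu₁ hu k⟩

theorem isPos_apply_sroot_of_not_isRightDescent {w : M.Group} {s : B}
    (hs : ¬M.toCoxeterSystem.IsRightDescent w s) : IsPos (ρ w (sroot s)) := by
  induction h : M.toCoxeterSystem.length w using Nat.strong_induction_on generalizing w s with
  | _ n ih =>
    obtain rfl | hw := eq_or_ne w 1
    · simpa using isPos_sroot s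
    obtain ⟨t, ht⟩ := M.toCoxeterSystem.exists_rightDescent_of_ne_one hw
    have hst : s ≠ t := by rintro rfl; exact hs ht
    obtain ⟨v, k, rfl, hlt, hvs, hvt, hk⟩ := exists_eq_mul_alternatingWord_of_isRightDescent hs ht
    obtain ⟨a, b, ha, hb, hab⟩ := hρ.exists_nonneg_apply_alternatingWord_sroot hst hk
    rw [map_mul, Module.End.mul_apply, hab, map_add, map_smul, map_smul]
    exact ((ih _ (h ▸ hlt) hvs rfl).smul ha).add ((ih _ (h ▸ hlt) hvt rfl).smul hb)

theorem isNeg_apply_sroot_of_isRightDescent {w : M.Group} {s : B}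
    (hs : M.toCoxeterSystem.IsRightDescent w s) : IsNeg (ρ w (sroot s)) := by
  have := hρ.isPos_apply_sroot_of_not_isRightDescent
    (M.toCoxeterSystem.isRightDescent_iff_not_isRightDescent_mul.mp hs)
  rwa [map_mul, Module.End.mul_apply, CoxeterMatrix.toCoxeterSystem_simple,
    hρ.apply_simple_sroot, map_neg, ← isNeg_neg_iff, neg_neg] at this

theorem isPos_or_isNeg {lam : B → ℝ} (h : IsRoot M ρ lam) : IsPos lam ∨ IsNeg lam := by
  obtain ⟨w, s, rfl⟩ := h
  by_cases hs : M.toCoxeterSystem.IsRightDescent w s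
  · exact .inr (hρ.isNeg_apply_sroot_of_isRightDescent hs)
  · exact .inl (hρ.isPos_apply_sroot_of_not_isRightDescent hs)

theorem eq_sroot_of_apply_eq_zero {lam : B → ℝ} (hroot : IsRoot M ρ lam) (hpos : IsPos lam)
    {r : B} (h : ∀ u ≠ r, lam u = 0) : lam = sroot r := by
  have hlam := eq_smul_sroot_of_apply_eq_zero h
  have hnorm := hρ.form_self_of_isRoot hroot
  rw [hlam, form_smul_left, form_smul_right, form_sroot_sroot, pairing_self] at hnorm
  have hr : lam r = 1 := by nlinarith [hpos r]
  rw [hlam, hr, one_smul]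

theorem eq_sroot_of_isNeg_apply_simple {lam : B → ℝ} (hroot : IsRoot M ρ lam)
    (hpos : IsPos lam) {s : B} (hneg : IsNeg (ρ (M.simple s) lam)) : lam = sroot s := by
  refine hρ.eq_sroot_of_apply_eq_zero hroot hpos fun u hu => ?_
  have := hneg u
  rw [hρ.apply_simple_apply_of_ne hu] at this
  exact le_antisymm this (hpos u)

theorem eq_sroot_of_form_sroot_nonpos {lam : B → ℝ} (hroot : IsRoot M ρ lam) (hpos : IsPos lam)
    {t : B} (ht : lam t = 1) (h : ∀ s ≠ t, form M lam (sroot s) ≤ 0) : lam = sroot t := by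
  have hle : 1 ≤ form M lam (sroot t) := by
    calc 1 = ∑ u, lam u * form M (sroot u) lam := by
          rw [← form_eq_sum_mul_form_sroot, hρ.form_self_of_isRoot hroot]
      _ ≤ ∑ u, if u = t then form M lam (sroot t) else 0 := by
          refine Finset.sum_le_sum fun u _ => ?_
          rw [form_symm]
          split_ifs with hu
          · rw [hu, ht, one_mul]
          · exact mul_nonpos_of_nonneg_of_nonpos (hpos u) (h u hu)
      _ = form M lam (sroot t) := by simp
  refine hρ.eq_sroot_of_isNeg_apply_simple hroot hpos ?_
  refine (hρ.isPos_or_isNeg (hroot.apply _)).resolve_left fun hpos' => ?_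
  have := hpos' t
  rw [hρ.apply_simple_apply_self, ht] at this
  linarith

end IsReflectionRep

section Depth

variable {M : CoxeterMatrix B} {ρ : M.Group →* Module.End ℝ (B → ℝ)}

theorem depth_le_length {lam : B → ℝ} {w : M.Group} (h : IsNeg (ρ w⁻¹ lam)) :
    depth M ρ lam ≤ M.toCoxeterSystem.length w :=
  Nat.sInf_le ⟨w, h, rfl⟩

namespace IsReflectionRep

variable [Fintype B] [DecidableEq B] (hρ : IsReflectionRep M ρ)
include hρ

theorem exists_length_eq_depth {lam : B → ℝ} (h : IsRoot M ρ lam) :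
    ∃ w, IsNeg (ρ w⁻¹ lam) ∧ M.toCoxeterSystem.length w = depth M ρ lam := by
  refine Nat.sInf_mem (s := {n | ∃ w : M.Group, IsNeg (ρ w⁻¹ lam) ∧
    M.toCoxeterSystem.length w = n}) ?_
  obtain ⟨w, s, rfl⟩ := h
  refine ⟨_, w * M.simple s, ?_, rfl⟩
  rw [mul_inv_rev, M.inv_simple, map_mul, Module.End.mul_apply,
    Representation.inv_self_apply, hρ.apply_simple_sroot,
    isNeg_neg_iff]
  exact isPos_sroot s

theorem exists_apply_inv_eq_neg_sroot {lam : B → ℝ} (hroot : IsRoot M ρ lam) (hpos : IsPos lam)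
    {v : M.Group} (hv : IsNeg (ρ v⁻¹ lam)) (hlen : M.toCoxeterSystem.length v = depth M ρ lam) :
    ∃ r, ρ v⁻¹ lam = -sroot r := by
  have hv₁ : v ≠ 1 := by
    rintro rfl
    exact hroot.ne_zero (hpos.eq_zero_of_isNeg (by simpa using hv))
  obtain ⟨r, hr⟩ := M.toCoxeterSystem.exists_rightDescent_of_ne_one hv₁
  have hlen' := M.toCoxeterSystem.isRightDescent_iff.mp hr
  simp only [CoxeterMatrix.toCoxeterSystem_simple] at hlen'
  set v' := v * M.simple r
  have hv' : v⁻¹ = M.simple r * v'⁻¹ := by simp [v', ← mul_assoc]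
  have hμ : IsPos (ρ v'⁻¹ lam) := by
    refine (hρ.isPos_or_isNeg (hroot.apply _)).resolve_right fun hneg => ?_
    have := depth_le_length hneg
    omega
  rw [hv', map_mul, Module.End.mul_apply] at hv ⊢
  rw [hρ.eq_sroot_of_isNeg_apply_simple (hroot.apply _) hμ hv, hρ.apply_simple_sroot]
  exact ⟨r, rfl⟩

theorem depth_apply_simple_lt {lam : B → ℝ} (hroot : IsRoot M ρ lam) {s : B}
    (hs : 0 < form M lam (sroot s)) (hμ : IsPos (ρ (M.simple s) lam)) :
    depth M ρ (ρ (M.simple s) lam) < depth M ρ lam := by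
  set μ := ρ (M.simple s) lam
  obtain ⟨v, hv, hlen⟩ := hρ.exists_length_eq_depth hroot
  by_cases hd : M.toCoxeterSystem.IsRightDescent v⁻¹ s
  · have hvs : IsNeg (ρ (v⁻¹ * M.simple s)⁻¹⁻¹ μ) := by
      simpa [μ, ← Module.End.mul_apply, ← map_mul, mul_assoc] using hv
    have hle := depth_le_length hvs
    have hlt := M.toCoxeterSystem.isRightDescent_iff.mp hd
    rw [M.toCoxeterSystem.length_inv] at hle
    rw [M.toCoxeterSystem.length_inv, CoxeterMatrix.toCoxeterSystem_simple] at hlt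
    omega
  set β := ρ v⁻¹ (sroot s)
  have hβ : IsPos β := hρ.isPos_apply_sroot_of_not_isRightDescent hd
  have hvμ : ∀ u, ρ v⁻¹ μ u = ρ v⁻¹ lam u - 2 * form M lam (sroot s) * β u := fun u => by
    simp [μ, hρ s lam, β]
  have hμneg : IsNeg (ρ v⁻¹ μ) := fun u => by
    have := mul_nonneg (mul_nonneg zero_le_two hs.le) (hβ u)
    linarith [hvμ u, hv u]
  refine lt_of_le_of_ne ((depth_le_length hμneg).trans_eq hlen) fun heq => ?_
  -- equal depths make `v` a minimal witness for `μ` too, which forces `β = α_r` and `μ = -α_s`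
  obtain ⟨r, hr⟩ := hρ.exists_apply_inv_eq_neg_sroot (hroot.apply _) hμ hμneg (hlen.trans heq.symm)
  have hβr : β = sroot r := by
    refine hρ.eq_sroot_of_apply_eq_zero ⟨v⁻¹, s, rfl⟩ hβ fun u hu => ?_
    have h₁ := hvμ u
    rw [hr, Pi.neg_apply, sroot_apply_of_ne hu, neg_zero] at h₁
    have h₂ : 2 * form M lam (sroot s) * β u ≤ 0 := by linarith [hv u]
    exact le_antisymm (nonpos_of_mul_nonpos_right h₂ (by positivity)) (hβ u)
  have hμs : μ = -sroot s := by
    rw [← Representation.self_inv_apply ρ v μ, hr, ← hβr, map_neg, Representation.self_inv_apply]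
  exact absurd (hμ s) (by norm_num [hμs])

end IsReflectionRep

end Depth

theorem statement15 [DecidableEq B] [Fintype B] (M : CoxeterMatrix B)
    (ρ : M.Group →* Module.End ℝ (B → ℝ))
    (hρ : ∀ (s : B) (v : B → ℝ),
      ρ (M.simple s) v = v - (2 * form M v (sroot s)) • sroot s)
    (lam : B → ℝ) (hlam : IsPosRoot M ρ lam) (t : B) (ht : lam t = 1) :
    ∃ w ∈ Subgroup.closure (M.simple '' {s : B | s ≠ t}),
      ρ w (sroot t) = lam := by
  replace hρ : IsReflectionRep M ρ := hρ
  obtain ⟨hroot, hpos⟩ := hlam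
  induction h : depth M ρ lam using Nat.strong_induction_on generalizing lam with
  | _ n ih =>
    by_cases hall : ∀ s ≠ t, form M lam (sroot s) ≤ 0
    · exact ⟨1, one_mem _, by simp [hρ.eq_sroot_of_form_sroot_nonpos hroot hpos ht hall]⟩
    simp only [not_forall, not_le] at hall
    obtain ⟨s, hst, hs⟩ := hall
    have hμt : ρ (M.simple s) lam t = 1 := by rw [hρ.apply_simple_apply_of_ne hst.symm, ht]
    have hμ : IsPos (ρ (M.simple s) lam) :=
      (hρ.isPos_or_isNeg (hroot.apply _)).resolve_right fun hneg => by linarith [hneg t]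
    obtain ⟨w, hw, hwμ⟩ := ih _ (h ▸ hρ.depth_apply_simple_lt hroot hs hμ) _ hμt
      (hroot.apply _) hμ rfl
    refine ⟨M.simple s * w, mul_mem (Subgroup.subset_closure ⟨s, hst, rfl⟩) hw, ?_⟩
    rw [map_mul, Module.End.mul_apply, hwμ, ← Module.End.mul_apply, ← map_mul,
      M.simple_mul_simple_self, map_one, Module.End.one_apply]
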